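/- The weighted Coulomb expectation W_l(x₃) = ((eB₀)^{l+1}/(2^l l!)) ∫₀^∞ ρ^{2l+1} e^{−eB₀ρ²/2} (ρ²+x₃²)^{−1/2} dρ is, for each fixed x₃ ∈ ℝ, maximal at l = 0, i.e. W_0(x₃) ≥ W_l(x₃) for all l ≥ 1. -/

import Mathlib

/-!
Write `J_n = ∫₀^∞ ρⁿ e^{-aρ²/2} (ρ² + c)^{-1/2} dρ`. Integrating `u v'` by parts with
`u = ρ^{n+2} e^{-aρ²/2}` and `v = (ρ² + c)^{-1/2}`, the boundary terms vanish and `∫ u v' ≤ 0`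
because `v` is decreasing, so `∫ u' v ≥ 0`, i.e. `a J_{n+3} ≤ (n + 2) J_{n+1}`.
For `n = 2l` and `c = x₃²` this is exactly `W_{l+1} ≤ W_l`, so `l ↦ W_l` is antitone.
-/

open Real Set MeasureTheory

/-- The weighted Coulomb expectation
`W_l(x₃) = ((eB₀)^{l+1}/(2^l l!)) ∫₀^∞ ρ^{2l+1} e^{−eB₀ρ²/2}(ρ²+x₃²)^{−1/2} dρ`. -/
noncomputable def Wl (eB0 x3 : ℝ) (l : ℕ) : ℝ :=
  eB0 ^ (l + 1) / (2 ^ l * Nat.factorial l) *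
    ∫ ρ in Set.Ioi (0 : ℝ),
      ρ ^ (2 * l + 1) * Real.exp (-eB0 * ρ ^ 2 / 2) / Real.sqrt (ρ ^ 2 + x3 ^ 2)

open Filter Topology

noncomputable def coulombMoment (a c : ℝ) (n : ℕ) : ℝ :=
  ∫ ρ in Ioi (0 : ℝ), ρ ^ n * exp (-a * ρ ^ 2 / 2) / √(ρ ^ 2 + c)

theorem Wl_eq_coulombMoment (a x : ℝ) (l : ℕ) :
    Wl a x l = a ^ (l + 1) / (2 ^ l * l.factorial) * coulombMoment a (x ^ 2) (2 * l + 1) := rfl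

section

variable {a c : ℝ}

theorem integrableOn_pow_mul_exp_neg_mul_sq_div_two (ha : 0 < a) (n : ℕ) :
    IntegrableOn (fun ρ : ℝ => ρ ^ n * exp (-a * ρ ^ 2 / 2)) (Ioi 0) := by
  have hn : (-1 : ℝ) < n := by linarith [n.cast_nonneg (α := ℝ)]
  refine (integrableOn_rpow_mul_exp_neg_mul_sq (half_pos ha) hn).congr_fun (fun ρ _ => ?_)
    measurableSet_Ioi
  simp only [rpow_natCast]
  ring_nf

theorem tendsto_pow_mul_exp_neg_mul_sq_div_two (ha : 0 < a) (n : ℕ) :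
    Tendsto (fun ρ : ℝ => ρ ^ n * exp (-a * ρ ^ 2 / 2)) atTop (𝓝 0) := by
  refine ((tendsto_rpow_abs_mul_exp_neg_mul_sq_cocompact (half_pos ha) n).mono_left
    atTop_le_cocompact).congr' ?_
  filter_upwards [eventually_ge_atTop 0] with ρ hρ
  rw [abs_of_nonneg hρ, rpow_natCast]
  ring_nf

theorem pow_add_mul_div_sqrt_pow_le {ρ f : ℝ} (hc : 0 ≤ c) (hρ : 0 < ρ) (hf : 0 ≤ f) (n k : ℕ) :
    ρ ^ (n + k) * f / √(ρ ^ 2 + c) ^ k ≤ ρ ^ n * f := by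
  have hw : ρ ≤ √(ρ ^ 2 + c) := le_sqrt_of_sq_le (by linarith)
  rw [div_le_iff₀ (by positivity), pow_add]
  calc ρ ^ n * ρ ^ k * f = ρ ^ n * f * ρ ^ k := by ring
    _ ≤ ρ ^ n * f * √(ρ ^ 2 + c) ^ k := by gcongr

theorem integrableOn_pow_mul_exp_div_sqrt_pow (ha : 0 < a) (hc : 0 ≤ c) (n k : ℕ) :
    IntegrableOn (fun ρ : ℝ => ρ ^ (n + k) * exp (-a * ρ ^ 2 / 2) / √(ρ ^ 2 + c) ^ k) (Ioi 0) := by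
  refine (integrableOn_pow_mul_exp_neg_mul_sq_div_two ha n).mono'
    (by fun_prop : Measurable _).aestronglyMeasurable ?_
  filter_upwards [ae_restrict_mem measurableSet_Ioi] with ρ (hρ : 0 < ρ)
  rw [Real.norm_of_nonneg (by positivity)]
  exact pow_add_mul_div_sqrt_pow_le hc hρ (exp_nonneg _) n k

theorem hasDerivAt_pow_mul_exp_neg_mul_sq_div_two (a ρ : ℝ) (n : ℕ) :
    HasDerivAt (fun ρ : ℝ => ρ ^ (n + 1) * exp (-a * ρ ^ 2 / 2))
      (((n + 1) * ρ ^ n - a * ρ ^ (n + 2)) * exp (-a * ρ ^ 2 / 2)) ρ := by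
  have h := (hasDerivAt_pow (n + 1) ρ).mul
    ((((hasDerivAt_pow 2 ρ).const_mul (-a)).div_const 2).exp)
  refine h.congr_deriv ?_
  push_cast
  ring

theorem hasDerivAt_inv_sqrt_sq_add {ρ : ℝ} (hc : 0 ≤ c) (hρ : 0 < ρ) :
    HasDerivAt (fun ρ : ℝ => (√(ρ ^ 2 + c))⁻¹) (-(ρ / √(ρ ^ 2 + c) ^ 3)) ρ := by
  have hpos : 0 < ρ ^ 2 + c := by positivity
  have h := (((hasDerivAt_pow 2 ρ).add_const c).sqrt hpos.ne').inv (sqrt_pos.2 hpos).ne'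
  refine h.congr_deriv ?_
  field_simp
  norm_num

theorem mul_coulombMoment_add_three_le (ha : 0 < a) (hc : 0 ≤ c) (n : ℕ) :
    a * coulombMoment a c (n + 3) ≤ (n + 2) * coulombMoment a c (n + 1) := by
  set e : ℝ → ℝ := fun ρ => exp (-a * ρ ^ 2 / 2)
  set w : ℝ → ℝ := fun ρ => √(ρ ^ 2 + c)
  set u : ℝ → ℝ := fun ρ => ρ ^ (n + 2) * e ρ
  set v : ℝ → ℝ := fun ρ => (w ρ)⁻¹
  have hu : ∀ ρ ∈ Ioi (0 : ℝ), HasDerivAt u (((n + 2) * ρ ^ (n + 1) - a * ρ ^ (n + 3)) * e ρ) ρ :=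
    fun ρ _ => (hasDerivAt_pow_mul_exp_neg_mul_sq_div_two a ρ (n + 1)).congr_deriv
      (by push_cast; ring)
  have hv : ∀ ρ ∈ Ioi (0 : ℝ), HasDerivAt v (-(ρ / w ρ ^ 3)) ρ :=
    fun ρ hρ => hasDerivAt_inv_sqrt_sq_add hc hρ
  have huv_le : ∀ ρ ∈ Ioi (0 : ℝ), (u * v) ρ ≤ ρ ^ (n + 1) * e ρ := fun ρ hρ => by
    have := pow_add_mul_div_sqrt_pow_le hc hρ (exp_nonneg (-a * ρ ^ 2 / 2)) (n + 1) 1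
    rwa [pow_one, div_eq_mul_inv] at this
  have huv_nonneg : ∀ ρ ∈ Ioi (0 : ℝ), 0 ≤ (u * v) ρ := fun ρ (hρ : 0 < ρ) => by
    simp only [Pi.mul_apply, u, v, w, e]; positivity
  have h_zero : Tendsto (u * v) (𝓝[>] 0) (𝓝 0) := by
    have hcont : Continuous fun ρ : ℝ => ρ ^ (n + 1) * e ρ := by fun_prop
    exact squeeze_zero' (eventually_nhdsWithin_of_forall huv_nonneg)
      (eventually_nhdsWithin_of_forall huv_le)
      (tendsto_nhdsWithin_of_tendsto_nhds (hcont.tendsto' 0 0 (by simp)))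
  have h_infty : Tendsto (u * v) atTop (𝓝 0) :=
    squeeze_zero' ((eventually_gt_atTop 0).mono huv_nonneg) ((eventually_gt_atTop 0).mono huv_le)
      (tendsto_pow_mul_exp_neg_mul_sq_div_two ha (n + 1))
  have hJ : ∀ k, IntegrableOn (fun ρ => ρ ^ (k + 1) * e ρ / w ρ) (Ioi 0) := fun k => by
    simpa only [pow_one] using integrableOn_pow_mul_exp_div_sqrt_pow ha hc k 1
  have huv' : IntegrableOn (u * fun ρ => -(ρ / w ρ ^ 3)) (Ioi 0) :=
    (integrableOn_pow_mul_exp_div_sqrt_pow ha hc n 3).neg.congr_fun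
      (fun ρ _ => by simp only [Pi.neg_apply, Pi.mul_apply, u]; ring) measurableSet_Ioi
  have hu'v : IntegrableOn ((fun ρ => ((n + 2) * ρ ^ (n + 1) - a * ρ ^ (n + 3)) * e ρ) * v)
      (Ioi 0) :=
    IntegrableOn.congr_fun (((hJ n).const_mul (n + 2)).sub ((hJ (n + 2)).const_mul a))
      (fun ρ _ => by simp only [Pi.sub_apply, Pi.mul_apply, v]; ring) measurableSet_Ioi
  have ibp := integral_Ioi_mul_deriv_eq_deriv_mul hu hv huv' hu'v h_zero h_infty
  have huv'_nonpos : ∫ ρ in Ioi 0, u ρ * -(ρ / w ρ ^ 3) ≤ 0 :=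
    setIntegral_nonpos measurableSet_Ioi fun ρ (hρ : 0 < ρ) =>
      mul_nonpos_of_nonneg_of_nonpos (by positivity) (neg_nonpos.2 (by positivity))
  have hu'v_eq : ∫ ρ in Ioi 0, ((n + 2) * ρ ^ (n + 1) - a * ρ ^ (n + 3)) * e ρ * v ρ
      = (n + 2) * coulombMoment a c (n + 1) - a * coulombMoment a c (n + 3) := by
    rw [coulombMoment, coulombMoment, ← integral_const_mul, ← integral_const_mul,
      ← integral_sub ((hJ n).const_mul _) ((hJ (n + 2)).const_mul _)]
    refine setIntegral_congr_fun measurableSet_Ioi fun ρ _ => ?_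
    simp only [v, w, e]
    ring
  linarith

theorem Wl_succ_le (ha : 0 < a) (x : ℝ) (l : ℕ) : Wl a x (l + 1) ≤ Wl a x l := by
  have hstep := mul_coulombMoment_add_three_le ha (sq_nonneg x) (2 * l)
  rw [Wl_eq_coulombMoment, Wl_eq_coulombMoment, show 2 * (l + 1) + 1 = 2 * l + 3 by ring]
  set J₁ := coulombMoment a (x ^ 2) (2 * l + 1)
  set J₃ := coulombMoment a (x ^ 2) (2 * l + 3)
  calc a ^ (l + 1 + 1) / (2 ^ (l + 1) * (l + 1).factorial) * J₃
      = a ^ (l + 1) / (2 ^ (l + 1) * (l + 1).factorial) * (a * J₃) := by ring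
    _ ≤ a ^ (l + 1) / (2 ^ (l + 1) * (l + 1).factorial) * (((2 * l : ℕ) + 2) * J₁) := by gcongr
    _ = a ^ (l + 1) / (2 ^ l * l.factorial) * J₁ := by
      rw [Nat.factorial_succ]
      push_cast
      field_simp
      ring

theorem antitone_Wl (ha : 0 < a) (x : ℝ) : Antitone (Wl a x) :=
  antitone_nat_of_succ_le (Wl_succ_le ha x)

end

/-- `W_l(x₃)` is maximal at `l = 0`:  `W_l(x₃) ≤ W_0(x₃)` for all `l ≥ 1`. -/
theorem stmt17 (eB0 x3 : ℝ) (heB0 : 0 < eB0) :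
    ∀ l : ℕ, 1 ≤ l → Wl eB0 x3 l ≤ Wl eB0 x3 0 :=
  fun l _ => antitone_Wl heB0 x3 l.zero_le
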